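/- Let X be symmetric positive definite, τ ∈ [0,1), and M symmetric with (1−τ)X⁻¹ ⪯ M ⪯ (1+τ)X⁻¹. Then for all vectors u, v: |[(vᵀX⁻¹v)(uᵀX⁻¹u) − (vᵀX⁻¹u)²] − [(vᵀMv)(uᵀMu) − (vᵀMu)²]| ≤ 2(τ + τ²)·[(vᵀX⁻¹v)(uᵀX⁻¹u) − (vᵀX⁻¹u)²]. -/

import Mathlib

/-!
For a positive semidefinite `S`, the Gram determinant
`G_S(u, v) = (vᵀSv)(uᵀSu) − (vᵀSu)²` is nonnegative (Cauchy–Schwarz), homogeneous of degree two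
in `S`, and superadditive in `S`; hence it is monotone for the Loewner order on positive
semidefinite matrices. The hypotheses make `M` positive semidefinite and sandwich it between
`(1 − τ)X⁻¹` and `(1 + τ)X⁻¹`, so `(1 − τ)² G ≤ G_M ≤ (1 + τ)² G` with `G = G_{X⁻¹}(u, v)`,
which gives `|G − G_M| ≤ (2τ + τ²) G`.
-/

open Matrix

namespace Matrix

variable {ι : Type*} [Fintype ι]

def gramDet (S : Matrix ι ι ℝ) (u v : ι → ℝ) : ℝ :=
  (v ⬝ᵥ S *ᵥ v) * (u ⬝ᵥ S *ᵥ u) - (v ⬝ᵥ S *ᵥ u) ^ 2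

lemma IsHermitian.dotProduct_mulVec_comm {S : Matrix ι ι ℝ} (hS : S.IsHermitian)
    (u v : ι → ℝ) : u ⬝ᵥ S *ᵥ v = v ⬝ᵥ S *ᵥ u := by
  rw [dotProduct_mulVec, ← vecMul_transpose, ← conjTranspose_eq_transpose_of_trivial, hS,
    dotProduct_comm]

lemma PosSemidef.dotProduct_mulVec_self_nonneg {S : Matrix ι ι ℝ} (hS : S.PosSemidef)
    (v : ι → ℝ) : 0 ≤ v ⬝ᵥ S *ᵥ v := by
  simpa using hS.dotProduct_mulVec_nonneg v

lemma PosSemidef.dotProduct_mulVec_sq_le {S : Matrix ι ι ℝ} (hS : S.PosSemidef) (u v : ι → ℝ) :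
    (v ⬝ᵥ S *ᵥ u) ^ 2 ≤ (v ⬝ᵥ S *ᵥ v) * (u ⬝ᵥ S *ᵥ u) := by
  have hquad : ∀ t : ℝ, 0 ≤ (u ⬝ᵥ S *ᵥ u) * (t * t) + 2 * (v ⬝ᵥ S *ᵥ u) * t + v ⬝ᵥ S *ᵥ v := by
    intro t
    have h := hS.dotProduct_mulVec_self_nonneg (v + t • u)
    simp only [mulVec_add, mulVec_smul, dotProduct_add, add_dotProduct, dotProduct_smul,
      smul_dotProduct, smul_eq_mul, hS.isHermitian.dotProduct_mulVec_comm u v] at h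
    linarith
  have hdiscr := discrim_le_zero hquad
  rw [discrim] at hdiscr
  linarith

lemma gramDet_nonneg {S : Matrix ι ι ℝ} (hS : S.PosSemidef) (u v : ι → ℝ) :
    0 ≤ gramDet S u v :=
  sub_nonneg.2 (hS.dotProduct_mulVec_sq_le u v)

lemma gramDet_smul (c : ℝ) (S : Matrix ι ι ℝ) (u v : ι → ℝ) :
    gramDet (c • S) u v = c ^ 2 * gramDet S u v := by
  simp only [gramDet, smul_mulVec, dotProduct_smul, smul_eq_mul]
  ring

lemma gramDet_add_le {A B : Matrix ι ι ℝ} (hA : A.PosSemidef) (hB : B.PosSemidef)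
    (u v : ι → ℝ) : gramDet A u v + gramDet B u v ≤ gramDet (A + B) u v := by
  have hAu := hA.dotProduct_mulVec_self_nonneg u
  have hAv := hA.dotProduct_mulVec_self_nonneg v
  have hBu := hB.dotProduct_mulVec_self_nonneg u
  have hBv := hB.dotProduct_mulVec_self_nonneg v
  have hprod : ((v ⬝ᵥ A *ᵥ u) * (v ⬝ᵥ B *ᵥ u)) ^ 2 ≤
      ((v ⬝ᵥ A *ᵥ v) * (u ⬝ᵥ B *ᵥ u)) * ((v ⬝ᵥ B *ᵥ v) * (u ⬝ᵥ A *ᵥ u)) :=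
    calc _ = (v ⬝ᵥ A *ᵥ u) ^ 2 * (v ⬝ᵥ B *ᵥ u) ^ 2 := mul_pow _ _ _
      _ ≤ ((v ⬝ᵥ A *ᵥ v) * (u ⬝ᵥ A *ᵥ u)) * ((v ⬝ᵥ B *ᵥ v) * (u ⬝ᵥ B *ᵥ u)) :=
        mul_le_mul (hA.dotProduct_mulVec_sq_le u v) (hB.dotProduct_mulVec_sq_le u v)
          (sq_nonneg _) (mul_nonneg hAv hAu)
      _ = _ := by ring
  -- `G_{A+B} − G_A − G_B` is the cross term bounded below by AM–GM.
  have hcross := two_mul_le_add_of_sq_le_mul (mul_nonneg hAv hBu) (mul_nonneg hBv hAu) hprod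
  simp only [gramDet, add_mulVec, dotProduct_add]
  linear_combination hcross

lemma gramDet_mono {A B : Matrix ι ι ℝ} (hA : A.PosSemidef) (hAB : (B - A).PosSemidef)
    (u v : ι → ℝ) : gramDet A u v ≤ gramDet B u v := by
  have h := gramDet_add_le hA hAB u v
  rw [add_sub_cancel] at h
  linarith [gramDet_nonneg hAB u v]

end Matrix

theorem cross_approx_general (n : ℕ) (X M : Matrix (Fin n) (Fin n) ℝ)
    (hX : X.PosDef)
    (τ : ℝ) (hτ : τ < 1)
    (hlow : (M - (1 - τ) • X⁻¹).PosSemidef)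
    (hup : ((1 + τ) • X⁻¹ - M).PosSemidef) :
    ∀ u v : Fin n → ℝ,
      |((v ⬝ᵥ X⁻¹.mulVec v) * (u ⬝ᵥ X⁻¹.mulVec u) - (v ⬝ᵥ X⁻¹.mulVec u) ^ 2) -
          ((v ⬝ᵥ M.mulVec v) * (u ⬝ᵥ M.mulVec u) - (v ⬝ᵥ M.mulVec u) ^ 2)| ≤
        2 * (τ + τ ^ 2) *
          ((v ⬝ᵥ X⁻¹.mulVec v) * (u ⬝ᵥ X⁻¹.mulVec u) - (v ⬝ᵥ X⁻¹.mulVec u) ^ 2) := by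
  intro u v
  have hXinv : X⁻¹.PosSemidef := hX.inv.posSemidef
  have hlowX : ((1 - τ) • X⁻¹).PosSemidef := hXinv.smul (by linarith)
  have hM : M.PosSemidef := by simpa using hlow.add hlowX
  have lower : (1 - τ) ^ 2 * gramDet X⁻¹ u v ≤ gramDet M u v :=
    gramDet_smul (1 - τ) X⁻¹ u v ▸ gramDet_mono hlowX hlow u v
  have upper : gramDet M u v ≤ (1 + τ) ^ 2 * gramDet X⁻¹ u v :=
    gramDet_smul (1 + τ) X⁻¹ u v ▸ gramDet_mono hM hup u v
  have hG := gramDet_nonneg hXinv u v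
  change |gramDet X⁻¹ u v - gramDet M u v| ≤ 2 * (τ + τ ^ 2) * gramDet X⁻¹ u v
  rw [abs_le]
  constructor <;> nlinarith [mul_nonneg (sq_nonneg τ) hG]

/-- If `(1−τ)X⁻¹ ⪯ M ⪯ (1+τ)X⁻¹` with `τ ∈ [0,1)`, then for all `u, v`:
`|[(vᵀX⁻¹v)(uᵀX⁻¹u) − (vᵀX⁻¹u)²] − [(vᵀMv)(uᵀMu) − (vᵀMu)²]|
  ≤ 2(τ + τ²)[(vᵀX⁻¹v)(uᵀX⁻¹u) − (vᵀX⁻¹u)²]`. -/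
theorem cross_approx (n : ℕ) (X M : Matrix (Fin n) (Fin n) ℝ)
    (hXsymm : X.IsSymm) (hX : X.PosDef) (hMsymm : M.IsSymm)
    (τ : ℝ) (hτ0 : 0 ≤ τ) (hτ : τ < 1)
    (hlow : (M - (1 - τ) • X⁻¹).PosSemidef)
    (hup : ((1 + τ) • X⁻¹ - M).PosSemidef) :
    ∀ u v : Fin n → ℝ,
      |((v ⬝ᵥ X⁻¹.mulVec v) * (u ⬝ᵥ X⁻¹.mulVec u) - (v ⬝ᵥ X⁻¹.mulVec u) ^ 2) -
          ((v ⬝ᵥ M.mulVec v) * (u ⬝ᵥ M.mulVec u) - (v ⬝ᵥ M.mulVec u) ^ 2)| ≤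
        2 * (τ + τ ^ 2) *
          ((v ⬝ᵥ X⁻¹.mulVec v) * (u ⬝ᵥ X⁻¹.mulVec u) - (v ⬝ᵥ X⁻¹.mulVec u) ^ 2) :=
  cross_approx_general n X M hX τ hτ hlow hup
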